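/- arXiv:2103.01058 — 9 statements merged into one kernel-verified Lean document; each statement's English description precedes it below -/
import Mathlib

section
/- For the rule-A vector fields Z₁, Z₂, Z₃ on ℝ⁶, the Lie brackets are given explicitly by [Zᵢ, Zᵢ₊₁](m) = (x_{i+1} − x_{i+2})∂_{xᵢ} + (y_{i+1} − y_{i+2})∂_{yᵢ} for each i = 1, 2, 3 (indices modulo 3); that is, [Zᵢ, Zᵢ₊₁](m) has xᵢ-component x_{i+1} − x_{i+2}, yᵢ-component y_{i+1} − y_{i+2}, and all other components zero. -/
/-- x-coordinate index of ant `i` in `ℝ⁶ = (x₁,y₁,x₂,y₂,x₃,y₃)`. -/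
def xc (i : Fin 3) : Fin 6 := ⟨2 * i.val, by have := i.isLt; omega⟩

/-- y-coordinate index of ant `i`. -/
def yc (i : Fin 3) : Fin 6 := ⟨2 * i.val + 1, by have := i.isLt; omega⟩

/-- Lie bracket of vector fields on ℝ⁶. -/
noncomputable def lieBracket (V W : (Fin 6 → ℝ) → (Fin 6 → ℝ)) :
    (Fin 6 → ℝ) → (Fin 6 → ℝ) :=
  fun m => fderiv ℝ W m (V m) - fderiv ℝ V m (W m)

/-- Rule-A vector fields: `Zᵢ = (x_{i+1} − xᵢ)∂_{xᵢ} + (y_{i+1} − yᵢ)∂_{yᵢ}`. -/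
def ZA (i : Fin 3) (m : Fin 6 → ℝ) : Fin 6 → ℝ := fun j =>
  if j = xc i then m (xc (i + 1)) - m (xc i)
  else if j = yc i then m (yc (i + 1)) - m (yc i)
  else 0

/-- `ZA i` as a linear map. -/
noncomputable def ZAlin (i : Fin 3) : (Fin 6 → ℝ) →ₗ[ℝ] (Fin 6 → ℝ) :=
  LinearMap.pi fun j =>
    if j = xc i then
      (LinearMap.proj (xc (i + 1)) : (Fin 6 → ℝ) →ₗ[ℝ] ℝ) - LinearMap.proj (xc i)
    else if j = yc i then
      (LinearMap.proj (yc (i + 1)) : (Fin 6 → ℝ) →ₗ[ℝ] ℝ) - LinearMap.proj (yc i)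
    else 0

noncomputable def ZAclm (i : Fin 3) : (Fin 6 → ℝ) →L[ℝ] (Fin 6 → ℝ) :=
  (ZAlin i).toContinuousLinearMap

lemma ZA_eq_clm (i : Fin 3) : ZA i = ⇑(ZAclm i) := by
  funext m j
  simp only [ZA, ZAclm, ZAlin, LinearMap.coe_toContinuousLinearMap',
    LinearMap.pi_apply]
  split_ifs <;> simp

lemma fderiv_ZA (i : Fin 3) (m : Fin 6 → ℝ) : fderiv ℝ (ZA i) m = ZAclm i := by
  rw [ZA_eq_clm]
  exact (ZAclm i).fderiv

theorem ruleA_brackets (i : Fin 3) (m : Fin 6 → ℝ) :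
    lieBracket (ZA i) (ZA (i + 1)) m = fun j =>
      if j = xc i then m (xc (i + 1)) - m (xc (i + 2))
      else if j = yc i then m (yc (i + 1)) - m (yc (i + 2))
      else 0 := by
  funext j
  simp only [lieBracket, fderiv_ZA, ZAclm, ZAlin,
    LinearMap.coe_toContinuousLinearMap', Pi.sub_apply, LinearMap.pi_apply]
  fin_cases i <;> fin_cases j <;>
    norm_num [ZA, xc, yc, Fin.ext_iff, LinearMap.sub_apply, LinearMap.proj_apply, Fin.add_def]
end

section
/- For the rule-A vector fields Z₁, Z₂, Z₃ on ℝ⁶, the determinant of the 6×6 matrix whose columns are, in this order, Z₁(m), Z₂(m), Z₃(m), [Z₁,Z₂](m), [Z₃,Z₁](m), [Z₂,Z₃](m), expressed in the standard basis ordered as (∂_{x₁}, ∂_{y₁}, ∂_{x₂}, ∂_{y₂}, ∂_{x₃}, ∂_{y₃}), equals F(m)³ where F(m) = Σ_{i=1}^{3} (yᵢ x_{i+1} − xᵢ y_{i+1}). In particular these six vectors are linearly independent at m if and only if F(m) ≠ 0. -/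
/-- Twice 16 times the signed area: `F(m) = Σᵢ (yᵢ x_{i+1} − xᵢ y_{i+1})`. -/
def F (m : Fin 6 → ℝ) : ℝ :=
  ∑ i : Fin 3, (m (yc i) * m (xc (i + 1)) - m (xc i) * m (yc (i + 1)))

/-- The six vectors `Z₁(m), Z₂(m), Z₃(m), [Z₁,Z₂](m), [Z₃,Z₁](m), [Z₂,Z₃](m)`. -/
noncomputable def cols (m : Fin 6 → ℝ) : Fin 6 → (Fin 6 → ℝ) :=
  ![ZA 0 m, ZA 1 m, ZA 2 m,
    lieBracket (ZA 0) (ZA 1) m, lieBracket (ZA 2) (ZA 0) m, lieBracket (ZA 1) (ZA 2) m]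

/-!
Each rule-A field is linear, so the Lie bracket of two of them is the commutator of the
corresponding linear maps, and all six columns are explicit. Ordering the columns as
`Z₁, [Z₁,Z₂], Z₂, [Z₂,Z₃], Z₃, [Z₃,Z₁]` (an even permutation) makes the matrix block diagonal
with three `2 × 2` blocks, one for each vertex `(xᵢ, yᵢ)`, and each block has determinant `F`.
-/

theorem lieBracket_continuousLinearMap (A B : (Fin 6 → ℝ) →L[ℝ] (Fin 6 → ℝ)) (m : Fin 6 → ℝ) :
    lieBracket A B m = B (A m) - A (B m) := by
  simp only [lieBracket, ContinuousLinearMap.fderiv]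

def ZA.linearMap (i : Fin 3) : (Fin 6 → ℝ) →ₗ[ℝ] (Fin 6 → ℝ) where
  toFun := ZA i
  map_add' a b := by ext j; simp only [ZA, Pi.add_apply]; split_ifs <;> ring
  map_smul' c a := by
    ext j; simp only [ZA, Pi.smul_apply, smul_eq_mul, RingHom.id_apply]; split_ifs <;> ring

theorem lieBracket_ZA (i j : Fin 3) (m : Fin 6 → ℝ) :
    lieBracket (ZA i) (ZA j) m = ZA j (ZA i m) - ZA i (ZA j m) :=
  lieBracket_continuousLinearMap (ZA.linearMap i).toContinuousLinearMap
    (ZA.linearMap j).toContinuousLinearMap m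

section
variable (m : Fin 6 → ℝ)

theorem ZA_zero : ZA 0 m = ![m 2 - m 0, m 3 - m 1, 0, 0, 0, 0] := by
  ext j; fin_cases j <;> rfl

theorem ZA_one : ZA 1 m = ![0, 0, m 4 - m 2, m 5 - m 3, 0, 0] := by
  ext j; fin_cases j <;> rfl

theorem ZA_two : ZA 2 m = ![0, 0, 0, 0, m 0 - m 4, m 1 - m 5] := by
  ext j; fin_cases j <;> rfl

theorem lieBracket_ZA_zero_one :
    lieBracket (ZA 0) (ZA 1) m = ![m 2 - m 4, m 3 - m 5, 0, 0, 0, 0] := by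
  rw [lieBracket_ZA, ZA_one, ZA_zero, ZA_zero, ZA_one]
  ext j; fin_cases j <;> simp

theorem lieBracket_ZA_two_zero :
    lieBracket (ZA 2) (ZA 0) m = ![0, 0, 0, 0, m 0 - m 2, m 1 - m 3] := by
  rw [lieBracket_ZA, ZA_zero, ZA_two, ZA_two, ZA_zero]
  ext j; fin_cases j <;> simp

theorem lieBracket_ZA_one_two :
    lieBracket (ZA 1) (ZA 2) m = ![0, 0, m 4 - m 0, m 5 - m 1, 0, 0] := by
  rw [lieBracket_ZA, ZA_two, ZA_one, ZA_one, ZA_two]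
  ext j; fin_cases j <;> simp

theorem of_cols_eq :
    Matrix.of (fun r c : Fin 6 => cols m c r) =
      !![m 2 - m 0, 0, 0, m 2 - m 4, 0, 0;
         m 3 - m 1, 0, 0, m 3 - m 5, 0, 0;
         0, m 4 - m 2, 0, 0, 0, m 4 - m 0;
         0, m 5 - m 3, 0, 0, 0, m 5 - m 1;
         0, 0, m 0 - m 4, 0, m 0 - m 2, 0;
         0, 0, m 1 - m 5, 0, m 1 - m 3, 0] := by
  ext r c
  fin_cases c <;> fin_cases r <;>
    simp [cols, ZA_zero, ZA_one, ZA_two, lieBracket_ZA_zero_one, lieBracket_ZA_two_zero,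
      lieBracket_ZA_one_two]

theorem F_eq : F m = (m 2 - m 0) * (m 3 - m 5) - (m 2 - m 4) * (m 3 - m 1) := by
  rw [F, Fin.sum_univ_three]
  change m 1 * m 2 - m 0 * m 3 + (m 3 * m 4 - m 2 * m 5) + (m 5 * m 0 - m 4 * m 1) = _
  ring

end

theorem det_of_three_interleaved_blocks {R : Type*} [CommRing R] (a b c d e f g h i j k l : R) :
    !![a, 0, 0, b, 0, 0;
       c, 0, 0, d, 0, 0;
       0, e, 0, 0, 0, f;
       0, g, 0, 0, 0, h;
       0, 0, i, 0, j, 0;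
       0, 0, k, 0, l, 0].det
      = (a * d - b * c) * (e * h - f * g) * (i * l - j * k) := by
  simp only [Matrix.det_succ_row_zero, Matrix.det_unique, Fin.sum_univ_succ, Fin.succAbove,
    Matrix.of_apply, Matrix.cons_val', Matrix.cons_val_fin_one, Matrix.cons_val_zero,
    Matrix.cons_val_one, Matrix.cons_val_succ, Matrix.cons_val, Matrix.submatrix_apply,
    Matrix.submatrix_submatrix, Function.comp_apply, Fin.isValue, Nat.succ_eq_add_one,
    Nat.reduceAdd, Fin.succ_zero_eq_one, Fin.succ_one_eq_two, Fin.reduceSucc, Fin.default_eq_zero,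
    Fin.castSucc_zero, Fin.castSucc_one, Fin.castSucc_succ, Fin.reduceCastSucc, Fin.coe_ofNat_eq_mod,
    Nat.zero_mod, Fin.val_succ, Fin.val_eq_zero, Fin.succ_pos, Fin.reduceLT, Fin.lt_one_iff,
    Fin.reduceEq, lt_self_iff_false, not_lt_zero, ↓reduceIte, Finset.univ_unique,
    Finset.sum_singleton, Finset.sum_neg_distrib, Finset.sum_const_zero, even_two, Even.neg_pow,
    one_pow, pow_zero, pow_one, one_mul, neg_mul, zero_add, mul_zero, zero_mul, neg_zero, add_zero]
  ring

theorem ruleA_det_eq_area_cubed (m : Fin 6 → ℝ) :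
    (Matrix.of fun r c : Fin 6 => cols m c r).det = (F m) ^ 3 ∧
    (LinearIndependent ℝ (cols m) ↔ F m ≠ 0) := by
  have hdet : (Matrix.of fun r c : Fin 6 => cols m c r).det = F m ^ 3 := by
    rw [of_cols_eq, det_of_three_interleaved_blocks, F_eq]
    ring
  refine ⟨hdet, ?_⟩
  change LinearIndependent ℝ (Matrix.of fun r c : Fin 6 => cols m c r).col ↔ _
  rw [Matrix.linearIndependent_cols_iff_isUnit, Matrix.isUnit_iff_isUnit_det, isUnit_iff_ne_zero,
    hdet, pow_ne_zero_iff three_ne_zero]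
end

section
/- The vector fields X₁, …, X₈ on ℝ⁶ are linearly independent over ℝ, their real linear span is closed under the Lie bracket of vector fields, and there exists an injective linear map φ : 𝔰𝔩(3,ℝ) → C^∞(ℝ⁶, ℝ⁶) whose range equals the real span of {X₁,…,X₈} and which satisfies φ([A,B]) = [φ(A), φ(B)] for all A, B ∈ 𝔰𝔩(3,ℝ); i.e. the span of X₁,…,X₈ with the bracket of vector fields is a Lie algebra isomorphic to 𝔰𝔩(3,ℝ). -/
/-- The eight symmetry vector fields `X₁,…,X₈` on ℝ⁶ with coordinates
`m = (x₁,y₁,x₂,y₂,x₃,y₃)` (indices `0,…,5`). -/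
def Xf : Fin 8 → (Fin 6 → ℝ) → (Fin 6 → ℝ) :=
  ![fun _ => ![1, 0, 1, 0, 1, 0],
    fun _ => ![0, 1, 0, 1, 0, 1],
    fun m => ![m 1, 0, m 3, 0, m 5, 0],
    fun m => ![0, m 0, 0, m 2, 0, m 4],
    fun m => ![m 0, 0, m 2, 0, m 4, 0],
    fun m => ![0, m 1, 0, m 3, 0, m 5],
    fun m => ![m 0 * m 1, m 1 ^ 2, m 2 * m 3, m 3 ^ 2, m 4 * m 5, m 5 ^ 2],
    fun m => ![m 0 ^ 2, m 0 * m 1, m 2 ^ 2, m 2 * m 3, m 4 ^ 2, m 4 * m 5]]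

/-!
The `Xᵢ` come from the action of `SL(3, ℝ)` by projective transformations on triples of points of
the affine chart `ℝ² = {[1 : p]} ⊆ ℝℙ²`. A linear map `T` of `𝕜 × E` moves `[1 : p]` with velocity
`T (1, p)`, whose component tangent to the chart is `v_T p = (T (1, p)).2 - (T (1, p)).1 • p`.
Lifting `v_S p` to `S (1, p) - (S (1, p)).1 • (1, p)` shows that `D v_T (v_S p)` is `v_{TS} p` plus
a term symmetric in `S` and `T`, so `[v_S, v_T] = v_{[T, S]}`; this survives the diagonal action on
triples and the linear change of coordinates to `ℝ⁶`. Finally `v_A = ∑ cᵢ(A) Xᵢ` where the `Xᵢ` are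
independent and `c` is a linear bijection from `𝔰𝔩(3, ℝ)` onto `ℝ⁸`.
-/

open ContinuousLinearMap

section ProjectiveVectorField

variable {𝕜 : Type*} [NontriviallyNormedField 𝕜] {E : Type*} [NormedAddCommGroup E]
  [NormedSpace 𝕜 E]

def projectiveVectorField (T : (𝕜 × E) →L[𝕜] 𝕜 × E) (p : E) : E :=
  (T (1, p)).2 - (T (1, p)).1 • p

theorem hasFDerivAt_projectiveVectorField (T : (𝕜 × E) →L[𝕜] 𝕜 × E) (p : E) :
    HasFDerivAt (projectiveVectorField T)
      (snd 𝕜 𝕜 E ∘L T ∘L inr 𝕜 𝕜 E - ((T (1, p)).1 • ContinuousLinearMap.id 𝕜 E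
        + (fst 𝕜 𝕜 E ∘L T ∘L inr 𝕜 𝕜 E).smulRight p)) p := by
  have hT : HasFDerivAt (fun q : E => T (1, q)) (T ∘L inr 𝕜 𝕜 E) p := by
    have : (fun q : E => T (1, q)) = fun q => T (1, 0) + (T ∘L inr 𝕜 𝕜 E) q := by
      ext q <;> simp [← map_add]
    rw [this]
    exact (T ∘L inr 𝕜 𝕜 E).hasFDerivAt.const_add _
  exact (hasFDerivAt_snd.comp p hT).sub ((hasFDerivAt_fst.comp p hT).smul (hasFDerivAt_id p))

theorem differentiable_projectiveVectorField (T : (𝕜 × E) →L[𝕜] 𝕜 × E) :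
    Differentiable 𝕜 (projectiveVectorField T) :=
  fun p => (hasFDerivAt_projectiveVectorField T p).differentiableAt

theorem fderiv_projectiveVectorField_apply (T : (𝕜 × E) →L[𝕜] 𝕜 × E) (p h : E) :
    fderiv 𝕜 (projectiveVectorField T) p h
      = (T (0, h)).2 - (T (1, p)).1 • h - (T (0, h)).1 • p := by
  simp [(hasFDerivAt_projectiveVectorField T p).fderiv, sub_sub]

theorem lieBracket_projectiveVectorField (S T : (𝕜 × E) →L[𝕜] 𝕜 × E) :
    VectorField.lieBracket 𝕜 (projectiveVectorField S) (projectiveVectorField T)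
      = projectiveVectorField ⁅T, S⁆ := by
  ext p
  have lift : ∀ U : (𝕜 × E) →L[𝕜] 𝕜 × E,
      ((0 : 𝕜), projectiveVectorField U p) = U (1, p) - (U (1, p)).1 • ((1 : 𝕜), p) := by
    intro U
    ext <;> simp [projectiveVectorField]
  rw [VectorField.lieBracket, fderiv_projectiveVectorField_apply,
    fderiv_projectiveVectorField_apply, lift, lift]
  simp only [projectiveVectorField, map_sub, map_smul, Ring.lie_def, sub_apply, mul_apply_eq_comp,
    Prod.fst_sub, Prod.snd_sub, Prod.smul_fst, Prod.smul_snd, smul_eq_mul]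
  module

end ProjectiveVectorField

section PiMap

variable {𝕜 : Type*} [NontriviallyNormedField 𝕜] {ι : Type*} [Fintype ι] {E : ι → Type*}
  [∀ i, NormedAddCommGroup (E i)] [∀ i, NormedSpace 𝕜 (E i)]

theorem hasFDerivAt_piMap {V : ∀ i, E i → E i} {P : ∀ i, E i}
    (hV : ∀ i, DifferentiableAt 𝕜 (V i) (P i)) :
    HasFDerivAt (Pi.map V) (ContinuousLinearMap.pi fun i => fderiv 𝕜 (V i) (P i) ∘L proj i) P :=
  hasFDerivAt_pi.2 fun i => (hV i).hasFDerivAt.comp P (hasFDerivAt_apply i P)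

theorem differentiable_piMap {V : ∀ i, E i → E i} (hV : ∀ i, Differentiable 𝕜 (V i)) :
    Differentiable 𝕜 (Pi.map V) :=
  fun P => (hasFDerivAt_piMap fun i => hV i (P i)).differentiableAt

theorem lieBracket_piMap {V W : ∀ i, E i → E i} (hV : ∀ i, Differentiable 𝕜 (V i))
    (hW : ∀ i, Differentiable 𝕜 (W i)) :
    VectorField.lieBracket 𝕜 (Pi.map V) (Pi.map W)
      = Pi.map fun i => VectorField.lieBracket 𝕜 (V i) (W i) := by
  ext P i
  simp [VectorField.lieBracket, (hasFDerivAt_piMap fun i => hV i (P i)).fderiv,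
    (hasFDerivAt_piMap fun i => hW i (P i)).fderiv]

end PiMap

theorem lieBracket_pullback_continuousLinearEquiv {𝕜 : Type*} [NontriviallyNormedField 𝕜]
    {E F : Type*} [NormedAddCommGroup E] [NormedSpace 𝕜 E] [CompleteSpace E]
    [NormedAddCommGroup F] [NormedSpace 𝕜 F] (e : E ≃L[𝕜] F) {V W : F → F}
    (hV : Differentiable 𝕜 V) (hW : Differentiable 𝕜 W) :
    VectorField.lieBracket 𝕜 (VectorField.pullback 𝕜 e V) (VectorField.pullback 𝕜 e W)
      = VectorField.pullback 𝕜 e (VectorField.lieBracket 𝕜 V W) :=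
  funext fun _ => (VectorField.pullback_lieBracket le_top e.contDiff.contDiffAt (hV _) (hW _)).symm

/-- The first coordinate of `𝕜 × 𝕜ⁿ` is the homogeneous one. -/
noncomputable def Matrix.toProdEnd (𝕜 : Type*) [NontriviallyNormedField 𝕜] [CompleteSpace 𝕜]
    (n : ℕ) :
    Matrix (Fin (n + 1)) (Fin (n + 1)) 𝕜 →ₐ[𝕜] ((𝕜 × (Fin n → 𝕜)) →L[𝕜] 𝕜 × (Fin n → 𝕜)) :=
  ((Fin.consEquivL 𝕜 fun _ => 𝕜).symm.conjContinuousAlgEquiv.toAlgEquiv.toAlgHom.comp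
    (Module.End.toContinuousLinearMap (Fin (n + 1) → 𝕜)).toAlgHom).comp
      Matrix.toLinAlgEquiv'.toAlgHom

open Matrix in
theorem Matrix.toProdEnd_apply {𝕜 : Type*} [NontriviallyNormedField 𝕜] [CompleteSpace 𝕜]
    {n : ℕ} (A : Matrix (Fin (n + 1)) (Fin (n + 1)) 𝕜) (t : 𝕜) (p : Fin n → 𝕜) :
    Matrix.toProdEnd 𝕜 n A (t, p) = ((A *ᵥ Fin.cons t p) 0, Fin.tail (A *ᵥ Fin.cons t p)) :=
  rfl

/-- `m = (x₁,y₁,x₂,y₂,x₃,y₃) ↦ ((x₁,y₁),(x₂,y₂),(x₃,y₃))` -/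
noncomputable def pointTriple : (Fin 6 → ℝ) ≃L[ℝ] (Fin 3 → Fin 2 → ℝ) :=
  ((LinearEquiv.funCongrLeft ℝ ℝ finProdFinEquiv).trans
    (LinearEquiv.curry ℝ ℝ (Fin 3) (Fin 2))).toContinuousLinearEquiv

theorem pointTriple_apply (m : Fin 6 → ℝ) (j : Fin 3) (r : Fin 2) :
    pointTriple m j r = m (finProdFinEquiv (j, r)) :=
  rfl

theorem pointTriple_symm_apply (P : Fin 3 → Fin 2 → ℝ) (j : Fin 3) (r : Fin 2) :
    pointTriple.symm P (finProdFinEquiv (j, r)) = P j r := by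
  rw [← pointTriple_apply (pointTriple.symm P), ContinuousLinearEquiv.apply_symm_apply]

noncomputable def tripleVectorField (A : Matrix (Fin 3) (Fin 3) ℝ) : (Fin 6 → ℝ) → Fin 6 → ℝ :=
  VectorField.pullback ℝ pointTriple (Pi.map fun _ => projectiveVectorField (Matrix.toProdEnd ℝ 2 A))

theorem tripleVectorField_apply (A : Matrix (Fin 3) (Fin 3) ℝ) (m : Fin 6 → ℝ) (j : Fin 3)
    (r : Fin 2) :
    tripleVectorField A m (finProdFinEquiv (j, r)) =
      projectiveVectorField (Matrix.toProdEnd ℝ 2 A) (fun r => m (finProdFinEquiv (j, r))) r := by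
  rw [tripleVectorField, VectorField.pullback_eq_of_fderiv_eq pointTriple.fderiv.symm,
    pointTriple_symm_apply]
  rfl

theorem lieBracket_eq_vectorField_lieBracket (V W : (Fin 6 → ℝ) → Fin 6 → ℝ) :
    lieBracket V W = VectorField.lieBracket ℝ V W :=
  rfl

theorem lieBracket_tripleVectorField (A B : Matrix (Fin 3) (Fin 3) ℝ) :
    lieBracket (tripleVectorField A) (tripleVectorField B) = tripleVectorField ⁅B, A⁆ := by
  have hdiff (C : Matrix (Fin 3) (Fin 3) ℝ) :
      Differentiable ℝ (Pi.map fun _ : Fin 3 => projectiveVectorField (Matrix.toProdEnd ℝ 2 C)) :=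
    differentiable_piMap fun _ => differentiable_projectiveVectorField _
  rw [lieBracket_eq_vectorField_lieBracket, tripleVectorField, tripleVectorField,
    lieBracket_pullback_continuousLinearEquiv _ (hdiff A) (hdiff B),
    lieBracket_piMap (fun _ => differentiable_projectiveVectorField _)
      (fun _ => differentiable_projectiveVectorField _),
    lieBracket_projectiveVectorField, tripleVectorField, Ring.lie_def, Ring.lie_def, map_sub,
    map_mul, map_mul]

noncomputable def xCoeffs : Matrix (Fin 3) (Fin 3) ℝ →ₗ[ℝ] Fin 8 → ℝ :=
  let e := Matrix.entryLinearMap ℝ ℝ (m := Fin 3) (n := Fin 3)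
  LinearMap.pi ![e 1 0, e 2 0, e 1 2, e 2 1, e 1 1 - e 0 0, e 2 2 - e 0 0, -e 0 2, -e 0 1]

theorem xCoeffs_apply (A : Matrix (Fin 3) (Fin 3) ℝ) :
    xCoeffs A = ![A 1 0, A 2 0, A 1 2, A 2 1, A 1 1 - A 0 0, A 2 2 - A 0 0, -A 0 2, -A 0 1] := by
  ext i
  fin_cases i <;> rfl

theorem tripleVectorField_eq_sum (A : Matrix (Fin 3) (Fin 3) ℝ) :
    tripleVectorField A = ∑ i, xCoeffs A i • Xf i := by
  ext m k
  obtain ⟨⟨j, r⟩, rfl⟩ := (finProdFinEquiv (m := 3) (n := 2)).surjective k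
  rw [tripleVectorField_apply]
  fin_cases j <;> fin_cases r <;>
    simp [Matrix.toProdEnd_apply, projectiveVectorField, Matrix.mulVec, dotProduct, Fin.sum_univ_succ,
      Fin.tail, Xf, xCoeffs_apply, finProdFinEquiv] <;> ring

theorem linearIndependent_Xf : LinearIndependent ℝ Xf := by
  rw [Fintype.linearIndependent_iff]
  intro c hc
  have hx (x y : ℝ) : c 0 + c 2 * y + c 4 * x + c 6 * (x * y) + c 7 * x ^ 2 = 0 := by
    simpa [Fin.sum_univ_eight, Xf] using congr_fun (congr_fun hc ![x, y, 0, 0, 0, 0]) 0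
  have hy (x y : ℝ) : c 1 + c 3 * x + c 5 * y + c 6 * y ^ 2 + c 7 * (x * y) = 0 := by
    simpa [Fin.sum_univ_eight, Xf] using congr_fun (congr_fun hc ![x, y, 0, 0, 0, 0]) 1
  intro i
  fin_cases i <;> simp only [Fin.isValue, Fin.zero_eta, Fin.mk_one, Fin.reduceFinMk] <;>
    linarith [hx 0 0, hx 1 0, hx (-1) 0, hx 0 1, hx 1 1, hy 0 0, hy 1 0, hy 0 1]

open LieAlgebra.SpecialLinear

noncomputable def slCoords : sl (Fin 3) ℝ →ₗ[ℝ] Fin 8 → ℝ where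
  toFun A := xCoeffs A
  map_add' A B := map_add xCoeffs A.val B.val
  map_smul' c A := map_smul xCoeffs c A.val

theorem slCoords_injective : Function.Injective slCoords := by
  rw [← LinearMap.ker_eq_bot, LinearMap.ker_eq_bot']
  intro A hA
  have htr : A.val 0 0 + A.val 1 1 + A.val 2 2 = 0 := Matrix.trace_fin_three A.val ▸ A.property
  simp only [slCoords, LinearMap.coe_mk, AddHom.coe_mk, xCoeffs_apply, Matrix.cons_eq_zero_iff,
    Matrix.zero_empty, and_true, neg_eq_zero, sub_eq_zero] at hA
  obtain ⟨h10, h20, h12, h21, h11, h22, h02, h01⟩ := hA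
  ext i j
  fin_cases i <;> fin_cases j <;>
    simp only [Fin.isValue, Fin.zero_eta, Fin.mk_one, Fin.reduceFinMk, ZeroMemClass.coe_zero,
      Matrix.zero_apply] <;> linarith

theorem slCoords_surjective : Function.Surjective slCoords := by
  intro c
  refine ⟨⟨!![-(c 4 + c 5) / 3, -c 7, -c 6; c 0, (2 * c 4 - c 5) / 3, c 2;
    c 1, c 3, (2 * c 5 - c 4) / 3], ?_⟩, ?_⟩
  · refine LinearMap.mem_ker.mpr ?_
    simp only [Matrix.traceLinearMap_apply, Matrix.trace_fin_three, Matrix.of_apply,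
      Matrix.cons_val', Matrix.cons_val_zero, Matrix.cons_val_fin_one, Matrix.cons_val_one,
      Matrix.cons_val]
    ring
  · ext i
    fin_cases i <;> simp [slCoords, xCoeffs_apply] <;> ring

/-- `T ↦ v_T` reverses brackets, hence the sign. -/
noncomputable def slToVectorField : sl (Fin 3) ℝ →ₗ[ℝ] (Fin 6 → ℝ) → Fin 6 → ℝ :=
  Fintype.linearCombination ℝ Xf ∘ₗ slCoords ∘ₗ (-LinearMap.id)

theorem slToVectorField_apply (A : sl (Fin 3) ℝ) :
    slToVectorField A = tripleVectorField (-A.val) := by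
  simp [slToVectorField, Fintype.linearCombination_apply, slCoords, tripleVectorField_eq_sum]

theorem slToVectorField_injective : Function.Injective slToVectorField :=
  linearIndependent_Xf.fintypeLinearCombination_injective.comp
    (slCoords_injective.comp neg_injective)

theorem range_slToVectorField :
    LinearMap.range slToVectorField = Submodule.span ℝ (Set.range Xf) := by
  rw [slToVectorField, LinearMap.range_comp_of_range_eq_top, Fintype.range_linearCombination]
  exact LinearMap.range_eq_top.2 (slCoords_surjective.comp neg_surjective)

theorem slToVectorField_lie (A B : sl (Fin 3) ℝ) :
    slToVectorField ⁅A, B⁆ = lieBracket (slToVectorField A) (slToVectorField B) := by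
  rw [slToVectorField_apply, slToVectorField_apply, slToVectorField_apply,
    lieBracket_tripleVectorField, sl_bracket, Ring.lie_def]
  congr 1
  noncomm_ring

theorem ruleA_symmetry_algebra_is_sl3 :
    LinearIndependent ℝ Xf ∧
    (∀ V W : (Fin 6 → ℝ) → (Fin 6 → ℝ),
      V ∈ Submodule.span ℝ (Set.range Xf) → W ∈ Submodule.span ℝ (Set.range Xf) →
      lieBracket V W ∈ Submodule.span ℝ (Set.range Xf)) ∧
    (∃ φ : (LieAlgebra.SpecialLinear.sl (Fin 3) ℝ) →ₗ[ℝ] ((Fin 6 → ℝ) → (Fin 6 → ℝ)),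
      Function.Injective φ ∧
      LinearMap.range φ = Submodule.span ℝ (Set.range Xf) ∧
      ∀ A B : LieAlgebra.SpecialLinear.sl (Fin 3) ℝ,
        φ ⁅A, B⁆ = lieBracket (φ A) (φ B)) := by
  refine ⟨linearIndependent_Xf, ?_, slToVectorField, slToVectorField_injective,
    range_slToVectorField, slToVectorField_lie⟩
  intro V W hV hW
  rw [← range_slToVectorField] at hV hW ⊢
  obtain ⟨A, rfl⟩ := hV
  obtain ⟨B, rfl⟩ := hW
  exact ⟨⁅A, B⁆, slToVectorField_lie A B⟩
end

section
/- Along any solution u = (u₁,u₂,u₃) of system (B) on an open interval I, both the product u₁u₂u₃ and the sum u₁ + u₂ + u₃ are constant functions of t. -/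
/-!
The right-hand sides of system (B) cancel cyclically: `∑ uᵢ'` is
`u₁(u₂ - u₃) + u₂(u₃ - u₁) + u₃(u₁ - u₂) = 0`, and `(u₁u₂u₃)' = u₁u₂u₃ · ∑ (u_{i+1} - u_{i+2}) = 0`.
A function with vanishing derivative on an interval is constant there.
-/

theorem IsOpen.eq_of_hasDerivAt_zero {𝕜 G : Type*} [RCLike 𝕜] [NormedAddCommGroup G]
    [NormedSpace 𝕜 G] {s : Set 𝕜} {f : 𝕜 → G} (hs : IsOpen s) (hs' : IsPreconnected s)
    (hf : ∀ x ∈ s, HasDerivAt f 0 x) {x y : 𝕜} (hx : x ∈ s) (hy : y ∈ s) : f x = f y :=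
  hs.is_const_of_deriv_eq_zero hs' (fun z hz => (hf z hz).differentiableAt.differentiableWithinAt)
    (fun z hz => (hf z hz).deriv) hx hy

section SystemB

variable {𝕜 : Type*} [NontriviallyNormedField 𝕜] {u₁ u₂ u₃ : 𝕜 → 𝕜} {t : 𝕜}

theorem hasDerivAt_mul_mul_zero_of_systemB (h₁ : HasDerivAt u₁ (u₁ t * (u₂ t - u₃ t)) t)
    (h₂ : HasDerivAt u₂ (u₂ t * (u₃ t - u₁ t)) t) (h₃ : HasDerivAt u₃ (u₃ t * (u₁ t - u₂ t)) t) :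
    HasDerivAt (fun x => u₁ x * u₂ x * u₃ x) 0 t :=
  ((h₁.mul h₂).mul h₃).congr_deriv (by simp only [Pi.mul_apply]; ring)

theorem hasDerivAt_add_add_zero_of_systemB (h₁ : HasDerivAt u₁ (u₁ t * (u₂ t - u₃ t)) t)
    (h₂ : HasDerivAt u₂ (u₂ t * (u₃ t - u₁ t)) t) (h₃ : HasDerivAt u₃ (u₃ t * (u₁ t - u₂ t)) t) :
    HasDerivAt (fun x => u₁ x + u₂ x + u₃ x) 0 t :=
  ((h₁.add h₂).add h₃).congr_deriv (by ring)

end SystemB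

theorem systemB_first_integrals (a b : ℝ) (u₁ u₂ u₃ : ℝ → ℝ)
    (h₁ : ∀ t ∈ Set.Ioo a b, HasDerivAt u₁ (u₁ t * (u₂ t - u₃ t)) t)
    (h₂ : ∀ t ∈ Set.Ioo a b, HasDerivAt u₂ (u₂ t * (u₃ t - u₁ t)) t)
    (h₃ : ∀ t ∈ Set.Ioo a b, HasDerivAt u₃ (u₃ t * (u₁ t - u₂ t)) t) :
    ∀ s ∈ Set.Ioo a b, ∀ t ∈ Set.Ioo a b,
      u₁ s * u₂ s * u₃ s = u₁ t * u₂ t * u₃ t ∧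
      u₁ s + u₂ s + u₃ s = u₁ t + u₂ t + u₃ t := by
  intro s hs t ht
  exact ⟨isOpen_Ioo.eq_of_hasDerivAt_zero isPreconnected_Ioo
      (fun x hx => hasDerivAt_mul_mul_zero_of_systemB (h₁ x hx) (h₂ x hx) (h₃ x hx)) hs ht,
    isOpen_Ioo.eq_of_hasDerivAt_zero isPreconnected_Ioo
      (fun x hx => hasDerivAt_add_add_zero_of_systemB (h₁ x hx) (h₂ x hx) (h₃ x hx)) hs ht⟩
end

section
/- Along any solution u = (u₁,u₂,u₃) of system (B) on an open interval I, each component does not change sign: for each i ∈ {1,2,3} and t₀ ∈ I, if uᵢ(t₀) > 0 then uᵢ(t) > 0 for all t ∈ I, if uᵢ(t₀) < 0 then uᵢ(t) < 0 for all t ∈ I, and if uᵢ(t₀) = 0 then uᵢ(t) = 0 for all t ∈ I. -/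
/-!
Each component solves a scalar linear equation `x' = x c` whose coefficient
`c = u (i + 1) - u (i + 2)` is continuous, so it has the closed form
`x t = x t₀ * exp (∫ τ in t₀..t, c τ)`, and a positive factor cannot change the sign of `x t₀`.
-/

open Set Real

section LinearODE

variable {s : Set ℝ} {c x : ℝ → ℝ} {t₀ t : ℝ}

theorem hasDerivAt_integral_of_continuousOn (hs : IsOpen s) (hs' : s.OrdConnected)
    (hc : ContinuousOn c s) (ht₀ : t₀ ∈ s) (ht : t ∈ s) :
    HasDerivAt (fun t => ∫ τ in t₀..t, c τ) (c t) t :=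
  intervalIntegral.integral_hasDerivAt_right
    (hc.mono (hs'.uIcc_subset ht₀ ht)).intervalIntegrable
    (hc.stronglyMeasurableAtFilter hs t ht) (hc.continuousAt (hs.mem_nhds ht))

theorem eq_mul_exp_integral_of_hasDerivAt (hs : IsOpen s) (hs' : s.OrdConnected)
    (hc : ContinuousOn c s) (hx : ∀ t ∈ s, HasDerivAt x (x t * c t) t)
    (ht₀ : t₀ ∈ s) (ht : t ∈ s) :
    x t = x t₀ * exp (∫ τ in t₀..t, c τ) := by
  set F : ℝ → ℝ := fun t => ∫ τ in t₀..t, c τ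
  have hg : ∀ τ ∈ s, HasDerivAt (fun t => x t * exp (-F t)) 0 τ := fun τ hτ =>
    ((hx τ hτ).mul (hasDerivAt_integral_of_continuousOn hs hs' hc ht₀ hτ).neg.exp).congr_deriv
      (by ring)
  have hconst : x t * exp (-F t) = x t₀ * exp (-F t₀) :=
    hs.is_const_of_deriv_eq_zero hs'.isPreconnected
      (fun τ hτ => (hg τ hτ).differentiableAt.differentiableWithinAt)
      (fun τ hτ => (hg τ hτ).deriv) ht ht₀
  rwa [show F t₀ = 0 from intervalIntegral.integral_same, neg_zero, exp_zero, mul_one,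
    exp_neg, ← div_eq_mul_inv, div_eq_iff (exp_pos _).ne'] at hconst

end LinearODE

theorem systemB_sign_preservation (a b : ℝ) (u : Fin 3 → ℝ → ℝ)
    (h : ∀ i : Fin 3, ∀ t ∈ Set.Ioo a b,
      HasDerivAt (u i) (u i t * (u (i + 1) t - u (i + 2) t)) t) :
    ∀ i : Fin 3, ∀ t₀ ∈ Set.Ioo a b,
      (0 < u i t₀ → ∀ t ∈ Set.Ioo a b, 0 < u i t) ∧
      (u i t₀ < 0 → ∀ t ∈ Set.Ioo a b, u i t < 0) ∧
      (u i t₀ = 0 → ∀ t ∈ Set.Ioo a b, u i t = 0) := by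
  intro i t₀ ht₀
  have hc : ContinuousOn (fun t => u (i + 1) t - u (i + 2) t) (Ioo a b) := fun t ht =>
    ((h _ t ht).continuousAt.sub (h _ t ht).continuousAt).continuousWithinAt
  have hsol := fun t (ht : t ∈ Ioo a b) =>
    eq_mul_exp_integral_of_hasDerivAt isOpen_Ioo ordConnected_Ioo hc (h i) ht₀ ht
  refine ⟨fun hpos t ht => ?_, fun hneg t ht => ?_, fun hzero t ht => ?_⟩
  · rw [hsol t ht]
    exact mul_pos hpos (exp_pos _)
  · rw [hsol t ht]
    exact mul_neg_of_neg_of_pos hneg (exp_pos _)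
  · rw [hsol t ht, hzero, zero_mul]
end

section
/- The barycenter of the triangle moves along a straight line with constant velocity along any singular trajectory: if u = (u₁,u₂,u₃) solves system (B) on an open interval I and z₁, z₂, z₃ : I → ℂ are differentiable with zᵢ' = uᵢ(z_{i+1} − z_{i+2}) for i = 1,2,3 (indices modulo 3), then the derivative of the barycenter z₀ = (z₁ + z₂ + z₃)/3, namely t ↦ z₀'(t), is a constant function on I; equivalently z₀ is twice differentiable with z₀'' ≡ 0. -/
/-!
The quantity `w = ∑ᵢ uᵢ (z_{i+1} - z_{i+2})`, three times the velocity of the barycenter,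
has derivative identically zero along system (B): differentiating it produces a cubic
expression in the `uᵢ` and the `zⱼ` that cancels algebraically. Hence `w` is constant on the
connected interval.
-/

theorem IsOpen.exists_hasDerivAt_const_of_hasDerivAt_zero {𝕜 G : Type*} [RCLike 𝕜]
    [NormedAddCommGroup G] [NormedSpace 𝕜 G] {s : Set 𝕜} {f g : 𝕜 → G}
    (hs : IsOpen s) (hs' : IsPreconnected s) (hf : ∀ t ∈ s, HasDerivAt f (g t) t)
    (hg : ∀ t ∈ s, HasDerivAt g 0 t) : ∃ v, ∀ t ∈ s, HasDerivAt f v t := by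
  obtain ⟨v, hv⟩ := hs.exists_is_const_of_deriv_eq_zero hs'
    (fun t ht => (hg t ht).differentiableAt.differentiableWithinAt)
    (fun t ht => (hg t ht).deriv)
  exact ⟨v, fun t ht => hv t ht ▸ hf t ht⟩

theorem sum_ruleB_velocity_deriv_eq_zero {R : Type*} [CommRing R] (u z : Fin 3 → R) :
    ∑ i, ((u i * (u (i + 1) - u (i + 2))) * (z (i + 1) - z (i + 2))
      + u i * (u (i + 1) * (z (i + 2) - z i) - u (i + 2) * (z i - z (i + 1)))) = 0 := by
  simp only [Fin.sum_univ_three, Fin.isValue, Fin.reduceAdd]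
  ring

theorem hasDerivAt_sum_ruleB_velocity_zero {𝕜 𝔸 : Type*} [NontriviallyNormedField 𝕜]
    [NormedCommRing 𝔸] [NormedAlgebra 𝕜 𝔸] {u z : Fin 3 → 𝕜 → 𝔸} {t : 𝕜}
    (hu : ∀ i, HasDerivAt (u i) (u i t * (u (i + 1) t - u (i + 2) t)) t)
    (hz : ∀ i, HasDerivAt (z i) (u i t * (z (i + 1) t - z (i + 2) t)) t) :
    HasDerivAt (fun s => ∑ i, u i s * (z (i + 1) s - z (i + 2) s)) 0 t := by
  have h := HasDerivAt.fun_sum (u := Finset.univ) fun i _ =>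
    (hu i).fun_mul ((hz (i + 1)).fun_sub (hz (i + 2)))
  simp only [add_assoc, Fin.isValue, Fin.reduceAdd, add_zero] at h
  rwa [sum_ruleB_velocity_deriv_eq_zero (fun i => u i t) (fun i => z i t)] at h

theorem barycenter_constant_velocity (a b : ℝ) (u : Fin 3 → ℝ → ℝ) (z : Fin 3 → ℝ → ℂ)
    (hu : ∀ i : Fin 3, ∀ t ∈ Set.Ioo a b,
      HasDerivAt (u i) (u i t * (u (i + 1) t - u (i + 2) t)) t)
    (hz : ∀ i : Fin 3, ∀ t ∈ Set.Ioo a b,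
      HasDerivAt (z i) ((u i t : ℂ) * (z (i + 1) t - z (i + 2) t)) t) :
    ∃ v : ℂ, ∀ t ∈ Set.Ioo a b,
      HasDerivAt (fun s => (z 0 s + z 1 s + z 2 s) / 3) v t := by
  refine isOpen_Ioo.exists_hasDerivAt_const_of_hasDerivAt_zero isPreconnected_Ioo
    (g := fun t => (∑ i, (u i t : ℂ) * (z (i + 1) t - z (i + 2) t)) / 3) (fun t ht => ?_)
    (fun t ht => ?_)
  · have h := (HasDerivAt.fun_sum (u := Finset.univ) fun i _ => hz i t ht).div_const 3
    simpa only [Fin.sum_univ_three] using h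
  · have hu' : ∀ i, HasDerivAt (fun s => (u i s : ℂ))
        ((u i t : ℂ) * ((u (i + 1) t : ℂ) - u (i + 2) t)) t := fun i => by
      exact_mod_cast (hu i t ht).ofReal_comp
    simpa using (hasDerivAt_sum_ruleB_velocity_zero hu' (hz · t ht)).div_const 3
end

section
/- Along any solution (u₁, u₂) of system (5) on an open interval I, the function u₁u₂(u₁ + u₂) is constant. -/
/-!
The cubic `H x y = x * y * (x + y)` is a Hamiltonian for system (5): `∂H/∂y = x * (x + 2 * y)`
and `∂H/∂x = y * (2 * x + y)`, so the system reads `u₁' = ∂H/∂y`, `u₂' = -∂H/∂x` and `H` has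
zero derivative along every solution.
-/

open Set

theorem HasDerivAt.mul_mul_add {u₁ u₂ : ℝ → ℝ} {v₁ v₂ t : ℝ} (hu₁ : HasDerivAt u₁ v₁ t)
    (hu₂ : HasDerivAt u₂ v₂ t) :
    HasDerivAt (fun s => u₁ s * u₂ s * (u₁ s + u₂ s))
      ((2 * u₁ t * u₂ t + u₂ t ^ 2) * v₁ + (u₁ t ^ 2 + 2 * u₁ t * u₂ t) * v₂) t :=
  ((hu₁.mul hu₂).mul (hu₁.add hu₂)).congr_deriv <| by
    simp only [Pi.add_apply, Pi.mul_apply]; ring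

theorem eq_of_hasDerivAt_zero_on_Ioo {G : Type*} [NormedAddCommGroup G] [NormedSpace ℝ G]
    {f : ℝ → G} {a b : ℝ} (hf : ∀ t ∈ Ioo a b, HasDerivAt f 0 t) {s t : ℝ}
    (hs : s ∈ Ioo a b) (ht : t ∈ Ioo a b) : f s = f t :=
  isOpen_Ioo.is_const_of_deriv_eq_zero isPreconnected_Ioo
    (fun x hx => (hf x hx).differentiableAt.differentiableWithinAt)
    (fun x hx => (hf x hx).deriv) hs ht

theorem system5_first_integral (a b : ℝ) (u₁ u₂ : ℝ → ℝ)
    (h₁ : ∀ t ∈ Set.Ioo a b, HasDerivAt u₁ (u₁ t * (u₁ t + 2 * u₂ t)) t)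
    (h₂ : ∀ t ∈ Set.Ioo a b, HasDerivAt u₂ (-(u₂ t * (2 * u₁ t + u₂ t))) t) :
    ∀ s ∈ Set.Ioo a b, ∀ t ∈ Set.Ioo a b,
      u₁ s * u₂ s * (u₁ s + u₂ s) = u₁ t * u₂ t * (u₁ t + u₂ t) := by
  have hH : ∀ t ∈ Ioo a b, HasDerivAt (fun s => u₁ s * u₂ s * (u₁ s + u₂ s)) 0 t :=
    fun t ht => ((h₁ t ht).mul_mul_add (h₂ t ht)).congr_deriv (by ring)
  exact fun s hs t ht => eq_of_hasDerivAt_zero_on_Ioo hH hs ht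
end

section
/- Suppose (u₁, u₂) solves system (5) on an open interval I with u₁(t) > 0 and u₂(t) > 0 for all t ∈ I, and let c = u₁(t₀)u₂(t₀)(u₁(t₀)+u₂(t₀)) for some t₀ ∈ I (this value being independent of t₀). Then for all t ∈ I: u₁'(t) = √(u₁(t)(u₁(t)³ + 4c)) and u₂'(t) = −√(u₂(t)(u₂(t)³ + 4c)). -/
/-! Along a solution the first integral `c = u₁ u₂ (u₁ + u₂)` is constant, and
`u₁ (u₁³ + 4 u₁ u₂ (u₁ + u₂)) = (u₁ (u₁ + 2 u₂))²` (symmetrically for `u₂`), so for positive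
solutions the right-hand sides of system (5) are exactly the square roots in the statement. -/

def system5FirstIntegral (x y : ℝ) : ℝ := x * y * (x + y)

lemma system5FirstIntegral_comm (x y : ℝ) :
    system5FirstIntegral x y = system5FirstIntegral y x := by
  unfold system5FirstIntegral; ring

lemma hasDerivAt_system5FirstIntegral {u₁ u₂ : ℝ → ℝ} {t : ℝ}
    (h₁ : HasDerivAt u₁ (u₁ t * (u₁ t + 2 * u₂ t)) t)
    (h₂ : HasDerivAt u₂ (-(u₂ t * (2 * u₁ t + u₂ t))) t) :
    HasDerivAt (fun s => system5FirstIntegral (u₁ s) (u₂ s)) 0 t := by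
  refine ((h₁.mul h₂).mul (h₁.add h₂)).congr_deriv ?_
  simp only [Pi.mul_apply, Pi.add_apply]
  ring

lemma system5FirstIntegral_eq_of_isPreconnected {s : Set ℝ} (hs : IsOpen s)
    (hs' : IsPreconnected s) {u₁ u₂ : ℝ → ℝ}
    (h₁ : ∀ t ∈ s, HasDerivAt u₁ (u₁ t * (u₁ t + 2 * u₂ t)) t)
    (h₂ : ∀ t ∈ s, HasDerivAt u₂ (-(u₂ t * (2 * u₁ t + u₂ t))) t) {t t₀ : ℝ}
    (ht : t ∈ s) (ht₀ : t₀ ∈ s) :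
    system5FirstIntegral (u₁ t) (u₂ t) = system5FirstIntegral (u₁ t₀) (u₂ t₀) := by
  have hF := fun t ht => hasDerivAt_system5FirstIntegral (h₁ t ht) (h₂ t ht)
  exact hs.is_const_of_deriv_eq_zero hs'
    (fun t ht => (hF t ht).differentiableAt.differentiableWithinAt)
    (fun t ht => (hF t ht).deriv) ht ht₀

lemma sqrt_mul_pow_three_add_four_mul_system5FirstIntegral {x y : ℝ} (hx : 0 ≤ x)
    (hy : 0 ≤ y) :
    √(x * (x ^ 3 + 4 * system5FirstIntegral x y)) = x * (x + 2 * y) := by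
  rw [← Real.sqrt_sq (by positivity : 0 ≤ x * (x + 2 * y))]
  congr 1
  unfold system5FirstIntegral
  ring

theorem system5_elliptic_form (a b : ℝ) (u₁ u₂ : ℝ → ℝ)
    (h₁ : ∀ t ∈ Set.Ioo a b, HasDerivAt u₁ (u₁ t * (u₁ t + 2 * u₂ t)) t)
    (h₂ : ∀ t ∈ Set.Ioo a b, HasDerivAt u₂ (-(u₂ t * (2 * u₁ t + u₂ t))) t)
    (hpos₁ : ∀ t ∈ Set.Ioo a b, 0 < u₁ t)
    (hpos₂ : ∀ t ∈ Set.Ioo a b, 0 < u₂ t)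
    (t₀ : ℝ) (ht₀ : t₀ ∈ Set.Ioo a b) (c : ℝ)
    (hc : c = u₁ t₀ * u₂ t₀ * (u₁ t₀ + u₂ t₀)) :
    ∀ t ∈ Set.Ioo a b,
      HasDerivAt u₁ (Real.sqrt (u₁ t * (u₁ t ^ 3 + 4 * c))) t ∧
      HasDerivAt u₂ (-Real.sqrt (u₂ t * (u₂ t ^ 3 + 4 * c))) t := by
  intro t ht
  have hct : c = system5FirstIntegral (u₁ t) (u₂ t) :=
    hc.trans (system5FirstIntegral_eq_of_isPreconnected isOpen_Ioo isPreconnected_Ioo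
      h₁ h₂ ht ht₀).symm
  have hx := (hpos₁ t ht).le
  have hy := (hpos₂ t ht).le
  constructor
  · rw [hct, sqrt_mul_pow_three_add_four_mul_system5FirstIntegral hx hy]
    exact h₁ t ht
  · rw [hct, system5FirstIntegral_comm, sqrt_mul_pow_three_add_four_mul_system5FirstIntegral hy hx,
      add_comm (u₂ t)]
    exact h₂ t ht
end

section
/- For any nondegenerate triangle in the plane there is a unique circumscribed ellipse whose tangent at each vertex is parallel to the opposite side: given v₁, v₂, v₃ ∈ ℝ² affinely independent, there exist a unique point c ∈ ℝ² and a unique positive-definite quadratic form Q on ℝ² with associated symmetric bilinear form B (so Q(w) = B(w,w)) such that, for each i = 1,2,3 (indices modulo 3), Q(vᵢ − c) = 1 and B(vᵢ − c, v_{i+1} − v_{i+2}) = 0. -/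
/-!
Write `uᵢ = vᵢ - c` and `B` for the polarization of `Q`. Tangency at `vᵢ` says that `B(uᵢ, uⱼ)`
is the same number `t` for all `i ≠ j`, so `B(uᵢ, u₀ + u₁ + u₂) = 2 + 2t` does not depend on `i`:
the vector `u₀ + u₁ + u₂` is `B`-orthogonal to every side, hence to the whole plane, and positive
definiteness forces it to vanish, i.e. `c` is the centroid. Then `t = -1`, so the Gram matrix of
`u₀, u₁, u₂` is fixed, and since these vectors span the plane it determines `Q`. Conversely the
form with this Gram matrix is positive definite.
-/

open QuadraticMap Module Set Submodule

theorem Fin.sum_univ_three_rotate {M : Type*} [AddCommMonoid M] (f : Fin 3 → M) (i : Fin 3) :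
    ∑ k, f k = f i + f (i + 1) + f (i + 2) := by
  rw [← Equiv.sum_comp (Equiv.addLeft i) f, Fin.sum_univ_three]
  simp

theorem span_range_vsub_eq_top {k V P ι : Type*} [Ring k] [AddCommGroup V] [Module k V]
    [AddTorsor V P] {v : ι → P} (hv : vectorSpan k (range v) = ⊤) (c : P) :
    span k (range fun i => v i -ᵥ c) = ⊤ := by
  rw [eq_top_iff, ← hv, vectorSpan_def, span_le]
  rintro _ ⟨_, ⟨i, rfl⟩, _, ⟨j, rfl⟩, rfl⟩
  show v i -ᵥ v j ∈ _
  rw [← vsub_sub_vsub_cancel_right (v i) (v j) c]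
  exact sub_mem (subset_span ⟨i, rfl⟩) (subset_span ⟨j, rfl⟩)

theorem QuadraticMap.eq_of_polar_eq_of_span_eq_top {R M N ι : Type*} [CommRing R]
    [AddCommGroup M] [Module R M] [AddCommGroup N] [Module R N] (h2 : IsUnit (2 : R))
    {u : ι → M} (hu : span R (range u) = ⊤) {Q Q' : QuadraticMap R M N}
    (h : ∀ i j, polar Q (u i) (u j) = polar Q' (u i) (u j)) : Q = Q' :=
  polarBilin_injective h2 <| LinearMap.ext_on_range hu fun i =>
    LinearMap.ext_on_range hu fun j => h i j

variable {V P : Type*} [AddCommGroup V] [Module ℝ V] [AddTorsor V P]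

/-- `polar Q` is twice the bilinear form `B` associated with `Q`. -/
def IsSteinerEllipse (v : Fin 3 → P) (c : P) (Q : QuadraticForm ℝ V) : Prop :=
  ∀ i, Q (v i -ᵥ c) = 1 ∧ polar Q (v i -ᵥ c) (v (i + 1) -ᵥ v (i + 2)) = 0

namespace IsSteinerEllipse

variable {v : Fin 3 → P} {c : P} {Q : QuadraticForm ℝ V}

theorem polar_eq (hS : IsSteinerEllipse v c Q) (i : Fin 3) :
    polar Q (v i -ᵥ c) (v (i + 1) -ᵥ c) = polar Q (v i -ᵥ c) (v (i + 2) -ᵥ c) := by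
  have h := (hS i).2
  rw [← vsub_sub_vsub_cancel_right (v (i + 1)) (v (i + 2)) c, polar_sub_right, sub_eq_zero] at h
  exact h

theorem polar_eq_of_ne (hS : IsSteinerEllipse v c Q) {i j : Fin 3} (hij : i ≠ j) :
    polar Q (v i -ᵥ c) (v j -ᵥ c) = polar Q (v 0 -ᵥ c) (v 1 -ᵥ c) := by
  have h₀ := hS.polar_eq 0
  have h₁ := hS.polar_eq 1
  simp only [Fin.isValue, zero_add, Fin.reduceAdd] at h₀ h₁
  have := polar_comm Q (v 0 -ᵥ c) (v 1 -ᵥ c)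
  have := polar_comm Q (v 0 -ᵥ c) (v 2 -ᵥ c)
  have := polar_comm Q (v 1 -ᵥ c) (v 2 -ᵥ c)
  fin_cases i <;> fin_cases j <;>
    simp only [Fin.zero_eta, Fin.mk_one, Fin.reduceFinMk, ne_eq, not_true_eq_false] at hij ⊢ <;>
    linarith

theorem polar_sum_vsub (hS : IsSteinerEllipse v c Q) (i : Fin 3) :
    polar Q (v i -ᵥ c) (∑ k, (v k -ᵥ c)) = 2 + 2 * polar Q (v 0 -ᵥ c) (v 1 -ᵥ c) := by
  rw [Fin.sum_univ_three_rotate _ i, polar_add_right, polar_add_right, polar_self, (hS i).1,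
    hS.polar_eq_of_ne (i := i) (by decide +revert), hS.polar_eq_of_ne (i := i) (by decide +revert)]
  ring

theorem sum_vsub_eq_zero (hS : IsSteinerEllipse v c Q) (hQ : Q.Anisotropic)
    (hv : vectorSpan ℝ (range v) = ⊤) : ∑ i, (v i -ᵥ c) = 0 := by
  set s := ∑ i, (v i -ᵥ c)
  have horth : polarBilin Q s = 0 := by
    refine LinearMap.ext_on ((vectorSpan_def ℝ _).symm.trans hv) ?_
    rintro _ ⟨_, ⟨i, rfl⟩, _, ⟨j, rfl⟩, rfl⟩
    show polar Q s (v i -ᵥ v j) = 0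
    rw [← vsub_sub_vsub_cancel_right (v i) (v j) c, polar_sub_right, polar_comm Q s,
      polar_comm Q s, hS.polar_sum_vsub, hS.polar_sum_vsub, sub_self]
  have hs : polar Q s s = 0 := LinearMap.congr_fun horth s
  rw [polar_self, two_nsmul, ← two_mul] at hs
  exact hQ s (by simpa using hs)

end IsSteinerEllipse

theorem isSteinerEllipse_iff_polar {v : Fin 3 → P} {c : P} {Q : QuadraticForm ℝ V}
    (hc : ∑ i, (v i -ᵥ c) = 0) :
    IsSteinerEllipse v c Q ↔
      ∀ i j, polar Q (v i -ᵥ c) (v j -ᵥ c) = if i = j then 2 else -1 := by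
  constructor
  · intro hS i j
    have ht : polar Q (v 0 -ᵥ c) (v 1 -ᵥ c) = -1 := by
      have := hS.polar_sum_vsub 0
      rw [hc, polar_zero_right] at this
      linarith
    split_ifs with hij
    · rw [hij, polar_self, (hS j).1]; norm_num
    · rw [hS.polar_eq_of_ne hij, ht]
  · intro h i
    refine ⟨?_, ?_⟩
    · have := h i i
      rw [if_pos rfl, polar_self, two_nsmul, ← two_mul] at this
      linarith
    · rw [← vsub_sub_vsub_cancel_right (v (i + 1)) (v (i + 2)) c, polar_sub_right, h, h,
        if_neg (by decide +revert), if_neg (by decide +revert), sub_self]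

/-- In the coordinates of `b`, the form `x₀² - x₀x₁ + x₁²`: its unit ellipse is the Steiner
circumellipse of the triangle `b 0, b 1, -(b 0 + b 1)`, whose centroid is `0`. -/
noncomputable def steinerForm (b : Basis (Fin 2) ℝ V) : QuadraticForm ℝ V :=
  linMulLin (b.coord 0) (b.coord 0) - linMulLin (b.coord 0) (b.coord 1) +
    linMulLin (b.coord 1) (b.coord 1)

theorem steinerForm_apply (b : Basis (Fin 2) ℝ V) (x : V) :
    steinerForm b x = b.repr x 0 ^ 2 - b.repr x 0 * b.repr x 1 + b.repr x 1 ^ 2 := by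
  simp [steinerForm, linMulLin_apply, _root_.sq]

theorem polar_steinerForm (b : Basis (Fin 2) ℝ V) (x y : V) :
    polar (steinerForm b) x y = 2 * b.repr x 0 * b.repr y 0 - b.repr x 0 * b.repr y 1 -
      b.repr x 1 * b.repr y 0 + 2 * b.repr x 1 * b.repr y 1 := by
  simp only [polar, steinerForm_apply, map_add, Finsupp.add_apply]
  ring

theorem steinerForm_posDef (b : Basis (Fin 2) ℝ V) : (steinerForm b).PosDef := by
  intro x hx
  rw [steinerForm_apply]
  by_contra hle
  have h₀ : b.repr x 0 = 0 := by nlinarith [sq_nonneg (b.repr x 0 - 2 * b.repr x 1)]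
  have h₁ : b.repr x 1 = 0 := by nlinarith [sq_nonneg (2 * b.repr x 0 - b.repr x 1)]
  exact hx (b.ext_elem fun i => by fin_cases i <;> simpa)

theorem exists_posDef_polar_eq [FiniteDimensional ℝ V] (hV : finrank ℝ V = 2) {u : Fin 3 → V}
    (hsum : ∑ i, u i = 0) (hspan : span ℝ (range u) = ⊤) :
    ∃ Q : QuadraticForm ℝ V, Q.PosDef ∧ ∀ i j, polar Q (u i) (u j) = if i = j then 2 else -1 := by
  have hu₂ : u 2 = -(u 0 + u 1) := by
    rw [Fin.sum_univ_three] at hsum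
    exact eq_neg_of_add_eq_zero_right hsum
  have hspan₂ : ⊤ ≤ span ℝ (range ![u 0, u 1]) := by
    rw [← hspan, span_le]
    rintro _ ⟨i, rfl⟩
    have h₀ : u 0 ∈ span ℝ (range ![u 0, u 1]) := subset_span ⟨0, rfl⟩
    have h₁ : u 1 ∈ span ℝ (range ![u 0, u 1]) := subset_span ⟨1, rfl⟩
    fin_cases i
    · exact h₀
    · exact h₁
    · simpa [hu₂] using neg_mem (add_mem h₀ h₁)
  let b := basisOfTopLeSpanOfCardEqFinrank _ hspan₂ (by simp [hV])
  have hb : ∀ i, u i = ![b 0, b 1, -(b 0 + b 1)] i := by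
    intro i; fin_cases i <;> simp [b, hu₂]
  refine ⟨steinerForm b, steinerForm_posDef b, fun i j => ?_⟩
  rw [hb, hb, polar_steinerForm]
  fin_cases i <;> fin_cases j <;> norm_num

theorem Affine.Simplex.existsUnique_isSteinerEllipse [FiniteDimensional ℝ V]
    (hV : finrank ℝ V = 2) (t : Affine.Simplex ℝ P 2) :
    ∃! cQ : P × QuadraticForm ℝ V, cQ.2.PosDef ∧ IsSteinerEllipse t.points cQ.1 cQ.2 := by
  have hv : vectorSpan ℝ (range t.points) = ⊤ :=
    t.independent.vectorSpan_eq_top_of_card_eq_finrank_add_one (by simp [hV])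
  have hsum := t.centroid_weighted_vsub_eq_zero
  have hspan := span_range_vsub_eq_top hv t.centroid
  obtain ⟨Q, hQ, hgram⟩ := exists_posDef_polar_eq hV hsum hspan
  refine ⟨(t.centroid, Q), ⟨hQ, (isSteinerEllipse_iff_polar hsum).2 hgram⟩, ?_⟩
  rintro ⟨c, Q'⟩ ⟨hQ', hS⟩
  obtain rfl : c = t.centroid := Affine.Simplex.eq_centroid_iff_sum_vsub_eq_zero.2
    (hS.sum_vsub_eq_zero hQ'.anisotropic hv)
  refine Prod.ext rfl (eq_of_polar_eq_of_span_eq_top two_ne_zero.isUnit hspan fun i j => ?_)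
  rw [(isSteinerEllipse_iff_polar hsum).1 hS, hgram]

theorem unique_inscribed_steiner_ellipse (v : Fin 3 → (Fin 2 → ℝ))
    (hv : AffineIndependent ℝ v) :
    ∃! cQ : (Fin 2 → ℝ) × QuadraticForm ℝ (Fin 2 → ℝ),
      cQ.2.PosDef ∧
      ∀ i : Fin 3,
        cQ.2 (v i - cQ.1) = 1 ∧
        (cQ.2 ((v i - cQ.1) + (v (i + 1) - v (i + 2))) -
          cQ.2 (v i - cQ.1) - cQ.2 (v (i + 1) - v (i + 2))) / 2 = 0 := by
  refine (existsUnique_congr fun cQ => and_congr_right fun _ => forall_congr' fun i =>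
    and_congr_right fun _ => ?_).1
    ((⟨v, hv⟩ : Affine.Simplex ℝ (Fin 2 → ℝ) 2).existsUnique_isSteinerEllipse (by simp))
  exact (div_eq_zero_iff.trans (or_iff_left two_ne_zero)).symm
end
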